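/- arXiv:2510.10852 — 2 statements merged into one kernel-verified Lean document; each statement's English description precedes it below -/
import Mathlib

section
/- Let p be a prime and let m ≥ 1, r be integers with 0 ≤ r ≤ m(p−1), and suppose d_RM(r,m) ≥ 3. Then for every pair of distinct points s_1, s_2 ∈ 𝔽_p^m, the minimum over all nonzero reduced polynomials f ∈ 𝔽_p[x_1,…,x_m] of total degree at most r of #{v ∈ 𝔽_p^m : v ∉ {s_1, s_2} and f(v) ≠ 0} equals d_RM(r,m) − 2. In particular this minimum (the distance of the twice-punctured Reed–Muller code) is independent of the two puncture locations. -/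
/-!
Write `q = |K|`. The lower bound is the Reed–Muller bound `(q - b) q^(m-a) ≤ q · #{f ≠ 0}` for a
nonzero reduced `f` of degree at most `a(q-1) + b`, by induction on `m`: if `f` has degree
`t ≤ q - 1` in the first variable, with leading coefficient `g`, then every point where `g` does not
vanish lies under at least `q - t` nonzeros of `f`, and `g` has degree at most `deg f - t`.
Puncturing two points removes at most two nonzeros.

For the matching example, pick a coordinate `k` where `s₁` and `s₂` differ and a shear fixing the
`k`-th coordinate after which `s₁` and `s₂` agree off `k`. Pulled back along the shear, the product
of the `x_i - c` over `c ∉ S i` is nonzero exactly on the box `∏ S i`; with `S i` a singleton for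
`a` coordinates and `S k ⊇ {s₁ k, s₂ k}` of size `q - b`, it has degree `a(q-1) + b` and
`(q - b) q^(m-a-1) = d` nonzeros, among them `s₁` and `s₂`. Reducing exponents modulo `x^q = x`
makes it reduced without changing its values or raising its degree.
-/

open MvPolynomial Finset

@[to_additive]
theorem Fintype.prod_ite_eq_ite_mem {σ M : Type*} [Fintype σ] [DecidableEq σ] [CommMonoid M]
    {k : σ} {A : Finset σ} (hk : k ∉ A) (x y z : M) :
    ∏ i, (if i = k then x else if i ∈ A then y else z) =
      x * y ^ #A * z ^ (Fintype.card σ - 1 - #A) := by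
  have hA : A ⊆ univ.erase k := fun i hi => mem_erase.mpr ⟨ne_of_mem_of_not_mem hi hk, mem_univ i⟩
  rw [← mul_prod_erase univ _ (mem_univ k), if_pos rfl, mul_assoc]
  congr 1
  rw [prod_ite_of_false fun i hi => ne_of_mem_erase hi, prod_ite, prod_const, prod_const,
    filter_mem_eq_inter, inter_eq_right.mpr hA, filter_not, filter_mem_eq_inter,
    inter_eq_right.mpr hA, card_sdiff_of_subset hA, card_erase_of_mem (mem_univ k), card_univ]

theorem Polynomial.card_sub_natDegree_le_card_eval_ne_zero {K : Type*} [Field K] [Fintype K]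
    [DecidableEq K] {P : Polynomial K} (hP : P ≠ 0) :
    Fintype.card K - P.natDegree ≤ #{x | P.eval x ≠ 0} := by
  have hroots : #{x | P.eval x = 0} ≤ P.natDegree :=
    card_le_degree_of_subset_roots fun x hx => by simpa [mem_roots hP] using hx
  have := card_filter_add_card_filter_not (s := univ) (fun x => P.eval x = 0)
  rw [card_univ] at this
  simp only [ne_eq]
  omega

namespace ReedMuller

-- Read with `q · d_RM(a(q-1)+b, m) = (q - b) q^(m-a)`: spending `t ≤ q - 1` of the degree on one
-- more variable divides the distance by at most `q - t`.
theorem exists_degree_split {q a b t : ℕ} (m : ℕ) (hq : 1 ≤ q) (hb : b ≤ q - 1) (ht : t ≤ q - 1)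
    (hta : t ≤ a * (q - 1) + b) :
    ∃ a' b', b' ≤ q - 1 ∧ a * (q - 1) + b - t ≤ a' * (q - 1) + b' ∧
      (q - b) * q ^ (m + 1 - a) ≤ (q - t) * ((q - b') * q ^ (m - a')) := by
  rcases le_or_gt t b with htb | hbt
  · refine ⟨a, b - t, by omega, by omega, ?_⟩
    have hpow : q ^ (m + 1 - a) ≤ q * q ^ (m - a) := by
      rw [← pow_succ']; exact Nat.pow_le_pow_right hq (by omega)
    have hcoef : (q - b) * q ≤ (q - t) * (q - (b - t)) := by
      zify [htb, show b ≤ q by omega, show t ≤ q by omega, show b - t ≤ q by omega]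
      nlinarith
    calc (q - b) * q ^ (m + 1 - a) ≤ (q - b) * q * q ^ (m - a) := by
          rw [mul_assoc]; exact Nat.mul_le_mul_left _ hpow
      _ ≤ (q - t) * ((q - (b - t)) * q ^ (m - a)) := by
          rw [← mul_assoc]; exact Nat.mul_le_mul_right _ hcoef
  · obtain ⟨a', rfl⟩ := Nat.exists_eq_add_one_of_ne_zero (by rintro rfl; omega : a ≠ 0)
    refine ⟨a', b + (q - 1) - t, by omega, by rw [add_one_mul]; omega, ?_⟩
    have hcoef : q - b ≤ (q - t) * (q - (b + (q - 1) - t)) := by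
      rw [show q - (b + (q - 1) - t) = (t - b) + 1 by omega, mul_add_one]
      have : t - b ≤ (q - t) * (t - b) := Nat.le_mul_of_pos_left _ (by omega)
      omega
    rw [show m + 1 - (a' + 1) = m - a' by omega, ← mul_assoc]
    exact Nat.mul_le_mul_right _ hcoef

section Reduction

variable {K σ : Type*} [Field K] [Fintype K]

def reduceExp (q e : ℕ) : ℕ := if e = 0 then 0 else (e - 1) % (q - 1) + 1

theorem reduceExp_zero (q : ℕ) : reduceExp q 0 = 0 := rfl

theorem reduceExp_le (q e : ℕ) : reduceExp q e ≤ e := by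
  unfold reduceExp
  split_ifs
  · omega
  · have := Nat.mod_le (e - 1) (q - 1); omega

theorem reduceExp_le_sub_one {q : ℕ} (hq : 1 < q) (e : ℕ) : reduceExp q e ≤ q - 1 := by
  unfold reduceExp
  split_ifs
  · omega
  · have := Nat.mod_lt (e - 1) (y := q - 1) (by omega); omega

theorem pow_reduceExp (x : K) (e : ℕ) : x ^ reduceExp (Fintype.card K) e = x ^ e := by
  unfold reduceExp
  split_ifs with he
  · rw [he]
  rcases eq_or_ne x 0 with rfl | hx
  · rw [zero_pow (by omega), zero_pow he]
  · have hsplit : e = (Fintype.card K - 1) * ((e - 1) / (Fintype.card K - 1)) +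
        ((e - 1) % (Fintype.card K - 1) + 1) := by
      have := Nat.div_add_mod (e - 1) (Fintype.card K - 1); omega
    conv_rhs => rw [hsplit, pow_add, pow_mul, FiniteField.pow_card_sub_one_eq_one x hx, one_pow,
      one_mul]

noncomputable def reduce (f : MvPolynomial σ K) : MvPolynomial σ K :=
  ∑ s ∈ f.support,
    monomial (s.mapRange (reduceExp (Fintype.card K)) (reduceExp_zero _)) (f.coeff s)

theorem eval_reduce (f : MvPolynomial σ K) (v : σ → K) : eval v (reduce f) = eval v f := by
  conv_rhs => rw [← support_sum_monomial_coeff f]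
  simp only [reduce, map_sum, eval_monomial]
  refine sum_congr rfl fun s _ => congrArg _ ?_
  rw [Finsupp.prod_mapRange_index fun _ => pow_zero _]
  exact Finsupp.prod_congr fun i _ => pow_reduceExp (v i) (s i)

theorem exists_mem_support_of_mem_support_reduce {f : MvPolynomial σ K} {u : σ →₀ ℕ}
    (hu : u ∈ (reduce f).support) :
    ∃ s ∈ f.support, u = s.mapRange (reduceExp (Fintype.card K)) (reduceExp_zero _) := by
  classical
  obtain ⟨s, hs, hu⟩ := mem_biUnion.mp (support_sum hu)
  exact ⟨s, hs, mem_singleton.mp (support_monomial_subset hu)⟩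

theorem degreeOf_reduce_le (f : MvPolynomial σ K) (i : σ) :
    (reduce f).degreeOf i ≤ Fintype.card K - 1 := by
  refine degreeOf_le_iff.mpr fun u hu => ?_
  obtain ⟨s, _, rfl⟩ := exists_mem_support_of_mem_support_reduce hu
  exact reduceExp_le_sub_one Fintype.one_lt_card _

theorem totalDegree_reduce_le (f : MvPolynomial σ K) :
    (reduce f).totalDegree ≤ f.totalDegree := by
  refine Finset.sup_le fun u hu => ?_
  obtain ⟨s, hs, rfl⟩ := exists_mem_support_of_mem_support_reduce hu
  rw [Finsupp.sum_mapRange_index fun _ => rfl]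
  exact (Finsupp.sum_le_sum fun i _ => reduceExp_le _ (s i)).trans (le_totalDegree hs)

end Reduction

theorem exists_shear {K σ : Type*} [Field K] [DecidableEq σ] {s₁ s₂ : σ → K} {k : σ}
    (hk : s₁ k ≠ s₂ k) :
    ∃ ℓ : σ → MvPolynomial σ K, (∀ i, (ℓ i).totalDegree ≤ 1) ∧
      Function.Bijective (fun v i => eval v (ℓ i)) ∧ ∀ i ≠ k, eval s₁ (ℓ i) = eval s₂ (ℓ i) := by
  let slope : σ → K := fun i => if i = k then 0 else (s₂ i - s₁ i) / (s₂ k - s₁ k)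
  refine ⟨fun i => X i - C (slope i) * X k, fun i => ?_, ⟨fun v w h => ?_, fun w => ?_⟩,
    fun i hi => ?_⟩
  · exact (totalDegree_sub _ _).trans (max_le (totalDegree_X i).le
      ((totalDegree_mul _ _).trans (by simp [totalDegree_C, totalDegree_X])))
  · have hvw : v k = w k := by simpa [slope] using congrFun h k
    ext i
    simpa [hvw] using congrFun h i
  · exact ⟨fun i => w i + slope i * w k, by ext i; simp [slope]⟩
  · have : s₂ k - s₁ k ≠ 0 := sub_ne_zero.mpr hk.symm
    simp only [map_sub, map_mul, eval_X, eval_C, slope, if_neg hi]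
    field_simp
    ring

variable {K : Type*} [Field K] [Fintype K] [DecidableEq K]

noncomputable def nonzeroLocus {σ : Type*} [Fintype σ] [DecidableEq σ] (f : MvPolynomial σ K) :
    Finset (σ → K) :=
  univ.filter fun v => eval v f ≠ 0

theorem nonzeroLocus_reduce {σ : Type*} [Fintype σ] [DecidableEq σ] (f : MvPolynomial σ K) :
    nonzeroLocus (reduce f) = nonzeroLocus f := by
  simp only [nonzeroLocus, eval_reduce]

theorem ne_zero_of_mem_nonzeroLocus {σ : Type*} [Fintype σ] [DecidableEq σ] {f : MvPolynomial σ K}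
    {v : σ → K} (hv : v ∈ nonzeroLocus f) : f ≠ 0 := by
  rintro rfl
  simp [nonzeroLocus] at hv

theorem filter_ne_and_ne_and_eval_ne_zero {σ : Type*} [Fintype σ] [DecidableEq σ]
    (f : MvPolynomial σ K) (s₁ s₂ : σ → K) :
    univ.filter (fun v => v ≠ s₁ ∧ v ≠ s₂ ∧ eval v f ≠ 0) = nonzeroLocus f \ {s₁, s₂} := by
  ext v
  simp only [nonzeroLocus, mem_filter, mem_sdiff, mem_insert, mem_singleton, mem_univ, true_and]
  tauto

theorem card_nonzeroLocus_leadingCoeff_finSuccEquiv_le {m : ℕ}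
    (f : MvPolynomial (Fin (m + 1)) K) :
    (Fintype.card K - (finSuccEquiv K m f).natDegree) *
        #(nonzeroLocus (finSuccEquiv K m f).leadingCoeff) ≤ #(nonzeroLocus f) := by
  set P := finSuccEquiv K m f
  have hfiber : ∀ y ∈ nonzeroLocus P.leadingCoeff,
      Fintype.card K - P.natDegree ≤ #{x | eval (Fin.cons x y : Fin (m + 1) → K) f ≠ 0} := by
    intro y hy
    have hPy : P.map (eval y) ≠ 0 := fun h => by
      have := congrArg (Polynomial.coeff · P.natDegree) h
      simp only [Polynomial.coeff_map, Polynomial.coeff_zero] at this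
      exact (mem_filter.mp hy).2 this
    simp only [eval_eq_eval_mv_eval']
    exact (Nat.sub_le_sub_left Polynomial.natDegree_map_le _).trans
      (Polynomial.card_sub_natDegree_le_card_eval_ne_zero hPy)
  have hsum : #(nonzeroLocus f) =
      ∑ y : Fin m → K, #{x | eval (Fin.cons x y : Fin (m + 1) → K) f ≠ 0} := by
    simp only [nonzeroLocus, card_filter]
    rw [← (Fin.consEquiv fun _ => K).sum_comp, Fintype.sum_prod_type_right]
    rfl
  rw [hsum, mul_comm, ← smul_eq_mul, ← sum_const]
  exact (sum_le_sum hfiber).trans (sum_le_sum_of_subset (subset_univ _))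

theorem le_mul_card_nonzeroLocus {m a b : ℕ} {f : MvPolynomial (Fin m) K} (hf : f ≠ 0)
    (hred : ∀ i, f.degreeOf i ≤ Fintype.card K - 1) (hb : b ≤ Fintype.card K - 1)
    (hdeg : f.totalDegree ≤ a * (Fintype.card K - 1) + b) :
    (Fintype.card K - b) * Fintype.card K ^ (m - a) ≤ Fintype.card K * #(nonzeroLocus f) := by
  induction m generalizing a b with
  | zero =>
    obtain ⟨c, rfl⟩ := C_surjective (Fin 0) f
    have hc : c ≠ 0 := by simpa using hf
    have : nonzeroLocus (C c : MvPolynomial (Fin 0) K) = univ :=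
      filter_true_of_mem fun v _ => by simpa using hc
    simp [this]
  | succ m ih =>
    set P := finSuccEquiv K m f
    have hP : P ≠ 0 := (EmbeddingLike.map_ne_zero_iff).mpr hf
    have hg : P.leadingCoeff ≠ 0 := Polynomial.leadingCoeff_ne_zero.mpr hP
    have htq : P.natDegree ≤ Fintype.card K - 1 := natDegree_finSuccEquiv f ▸ hred 0
    have htdeg : P.leadingCoeff.totalDegree + P.natDegree ≤ f.totalDegree :=
      totalDegree_coeff_finSuccEquiv_add_le f _ hg
    obtain ⟨a', b', hb', hdeg', hstep⟩ :=
      exists_degree_split m Fintype.card_pos hb htq (by omega : P.natDegree ≤ a * _ + b)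
    have hgred : ∀ i, P.leadingCoeff.degreeOf i ≤ Fintype.card K - 1 :=
      fun i => (degreeOf_coeff_finSuccEquiv f i _).trans (hred i.succ)
    calc (Fintype.card K - b) * Fintype.card K ^ (m + 1 - a)
        ≤ (Fintype.card K - P.natDegree) *
            ((Fintype.card K - b') * Fintype.card K ^ (m - a')) := hstep
      _ ≤ (Fintype.card K - P.natDegree) *
            (Fintype.card K * #(nonzeroLocus P.leadingCoeff)) :=
          Nat.mul_le_mul_left _ (ih hg hgred hb' (by omega))
      _ = Fintype.card K * ((Fintype.card K - P.natDegree) * #(nonzeroLocus P.leadingCoeff)) := by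
          ring
      _ ≤ Fintype.card K * #(nonzeroLocus f) :=
          Nat.mul_le_mul_left _ (card_nonzeroLocus_leadingCoeff_finSuccEquiv_le f)

section Construction

variable {σ ι : Type*} [Fintype ι]

noncomputable def boxPoly (ℓ : ι → MvPolynomial σ K) (S : ι → Finset K) : MvPolynomial σ K :=
  ∏ i, ∏ c ∈ (S i)ᶜ, (ℓ i - C c)

theorem eval_boxPoly_ne_zero_iff [DecidableEq ι] (ℓ : ι → MvPolynomial σ K) (S : ι → Finset K)
    (v : σ → K) :
    eval v (boxPoly ℓ S) ≠ 0 ↔ (fun i => eval v (ℓ i)) ∈ Fintype.piFinset S := by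
  simp only [boxPoly, map_prod, map_sub, eval_C, prod_ne_zero_iff, sub_ne_zero,
    Fintype.mem_piFinset, mem_compl, mem_univ, true_implies]
  exact forall_congr' fun i => ⟨fun h => by_contra fun hi => h _ hi rfl,
    fun h c hc hv => hc (hv ▸ h)⟩

theorem totalDegree_boxPoly_le {ℓ : ι → MvPolynomial σ K} (hℓ : ∀ i, (ℓ i).totalDegree ≤ 1)
    (S : ι → Finset K) : (boxPoly ℓ S).totalDegree ≤ ∑ i, #(S i)ᶜ := by
  refine (totalDegree_finsetProd _ _).trans (sum_le_sum fun i _ => ?_)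
  refine (totalDegree_finsetProd _ _).trans ?_
  rw [card_eq_sum_ones]
  exact sum_le_sum fun c _ => (totalDegree_sub_C_le _ _).trans (hℓ i)

theorem card_nonzeroLocus_boxPoly [DecidableEq σ] [Fintype σ] {ℓ : σ → MvPolynomial σ K}
    (hℓ : Function.Bijective fun v i => eval v (ℓ i)) (S : σ → Finset K) :
    #(nonzeroLocus (boxPoly ℓ S)) = ∏ i, #(S i) := by
  rw [← Fintype.card_piFinset]
  exact card_equiv (Equiv.ofBijective _ hℓ) fun v => by
    rw [nonzeroLocus, mem_filter, eval_boxPoly_ne_zero_iff]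
    simp

variable [Fintype σ] [DecidableEq σ]

theorem exists_box {a b : ℕ} {t₁ t₂ : σ → K} {k : σ} (ht : ∀ i ≠ k, t₁ i = t₂ i)
    (ha : a < Fintype.card σ) (hb : b ≤ Fintype.card K - 2) :
    ∃ S : σ → Finset K, t₁ ∈ Fintype.piFinset S ∧ t₂ ∈ Fintype.piFinset S ∧
      ∑ i, #(S i)ᶜ = a * (Fintype.card K - 1) + b ∧
      ∏ i, #(S i) = (Fintype.card K - b) * Fintype.card K ^ (Fintype.card σ - a - 1) := by
  obtain ⟨A, hAk, hA⟩ := exists_subset_card_eq (s := univ.erase k) (n := a)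
    (by rw [card_erase_of_mem (mem_univ _), card_univ]; omega)
  have hkA : k ∉ A := fun h => by simpa using hAk h
  obtain ⟨B, hB, -, hBcard⟩ := exists_subsuperset_card_eq (s := {t₁ k, t₂ k}) (t := univ)
    (n := Fintype.card K - b) (subset_univ _)
    (by have := Fintype.one_lt_card (α := K); have := card_le_two (a := t₁ k) (b := t₂ k); omega)
    (by rw [card_univ]; omega)
  refine ⟨fun i => if i = k then B else if i ∈ A then {t₁ i} else univ, ?_, ?_, ?_, ?_⟩
  · refine Fintype.mem_piFinset.mpr fun i => ?_
    split_ifs with hik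
    exacts [hB (by simp [hik]), mem_singleton_self _, mem_univ _]
  · refine Fintype.mem_piFinset.mpr fun i => ?_
    split_ifs with hik
    exacts [hB (by simp [hik]), by simp [ht i hik], mem_univ _]
  · rw [Fintype.sum_congr _ (fun i => if i = k then b else if i ∈ A then Fintype.card K - 1 else 0)
      fun i => by dsimp only; split_ifs <;> simp [card_compl, hBcard]; omega,
      Fintype.sum_ite_eq_ite_mem hkA, hA]
    simp [add_comm]
  · rw [Fintype.prod_congr _ (fun i => if i = k then Fintype.card K - b else if i ∈ A then 1
      else Fintype.card K) fun i => by dsimp only; split_ifs <;> simp [hBcard],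
      Fintype.prod_ite_eq_ite_mem hkA, hA, one_pow, mul_one]
    congr 2
    omega

theorem exists_reduced_card_nonzeroLocus_eq {a b : ℕ} {s₁ s₂ : σ → K} (hs : s₁ ≠ s₂)
    (ha : a < Fintype.card σ) (hb : b ≤ Fintype.card K - 2) :
    ∃ f : MvPolynomial σ K, (∀ i, f.degreeOf i ≤ Fintype.card K - 1) ∧
      f.totalDegree ≤ a * (Fintype.card K - 1) + b ∧ s₁ ∈ nonzeroLocus f ∧ s₂ ∈ nonzeroLocus f ∧
      #(nonzeroLocus f) = (Fintype.card K - b) * Fintype.card K ^ (Fintype.card σ - a - 1) := by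
  obtain ⟨k, hk⟩ := Function.ne_iff.mp hs
  obtain ⟨ℓ, hℓdeg, hℓ, hℓ₁₂⟩ := exists_shear hk
  obtain ⟨S, h₁, h₂, hdeg, hcard⟩ := exists_box hℓ₁₂ ha hb
  refine ⟨reduce (boxPoly ℓ S), degreeOf_reduce_le _, ?_, ?_, ?_, ?_⟩
  · exact (totalDegree_reduce_le _).trans (hdeg ▸ totalDegree_boxPoly_le hℓdeg S)
  all_goals rw [nonzeroLocus_reduce]
  · exact mem_filter.mpr ⟨mem_univ _, (eval_boxPoly_ne_zero_iff ℓ S s₁).mpr h₁⟩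
  · exact mem_filter.mpr ⟨mem_univ _, (eval_boxPoly_ne_zero_iff ℓ S s₂).mpr h₂⟩
  · rw [card_nonzeroLocus_boxPoly hℓ, hcard]

end Construction

end ReedMuller

open ReedMuller in
theorem twice_punctured_reedMuller_distance_general (p m r a b d : ℕ) [Fact p.Prime]
    (hab : r = a * (p - 1) + b) (hb : b ≤ p - 2)
    (hd : p * d = (p - b) * p ^ (m - a)) (hd3 : 3 ≤ d)
    (s₁ s₂ : Fin m → ZMod p) (hs : s₁ ≠ s₂) :
    IsLeast {n : ℕ | ∃ f : MvPolynomial (Fin m) (ZMod p), f ≠ 0 ∧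
      (∀ i, f.degreeOf i ≤ p - 1) ∧ f.totalDegree ≤ r ∧
      n = (Finset.univ.filter
        fun v : Fin m → ZMod p =>
          v ≠ s₁ ∧ v ≠ s₂ ∧ MvPolynomial.eval v f ≠ 0).card}
      (d - 2) := by
  have hp : 0 < p := (Fact.out : p.Prime).pos
  have hq : Fintype.card (ZMod p) = p := ZMod.card p
  have ham : a < m := by
    by_contra! h
    rw [Nat.sub_eq_zero_of_le h, pow_zero, mul_one] at hd
    nlinarith [Nat.sub_le p b]
  have hd' : d = (p - b) * p ^ (m - a - 1) := by
    refine Nat.eq_of_mul_eq_mul_left hp ?_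
    rw [hd, mul_left_comm, ← pow_succ', Nat.sub_add_cancel (by omega)]
  constructor
  · obtain ⟨f, hred, hdeg, h₁, h₂, hcount⟩ :=
      exists_reduced_card_nonzeroLocus_eq hs (a := a) (b := b) (by simpa using ham) (by rwa [hq])
    rw [hq] at hred hdeg hcount
    refine ⟨f, ne_zero_of_mem_nonzeroLocus h₁, hred, hab ▸ hdeg, ?_⟩
    rw [filter_ne_and_ne_and_eval_ne_zero, card_sdiff_of_subset (insert_subset h₁ (by simpa)),
      card_pair hs, hcount, hd', Fintype.card_fin]
  · rintro n ⟨f, hf, hred, hdeg, rfl⟩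
    have hbound := le_mul_card_nonzeroLocus hf (b := b) (by rwa [hq]) (by rw [hq]; omega)
      (by rwa [hq, ← hab])
    rw [hq, ← hd] at hbound
    have hd_le := Nat.le_of_mul_le_mul_left hbound hp
    have hpunct := le_card_sdiff {s₁, s₂} (nonzeroLocus f)
    rw [card_pair hs] at hpunct
    rw [filter_ne_and_ne_and_eval_ne_zero]
    omega

/-- Let `0 ≤ r ≤ m(p−1)`, write `r = a(p−1)+b` with
`0 ≤ b ≤ p−2`, and let `d = d_RM(r,m)` be the natural number with
`p·d = (p−b)·p^{m−a}`; suppose `d ≥ 3`.  Then for every pair of distinct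
puncture locations `s₁ ≠ s₂ ∈ 𝔽_p^m`, the minimum over all nonzero reduced
polynomials `f` of total degree at most `r` of
`#{v : v ∉ {s₁,s₂} ∧ f(v) ≠ 0}` equals `d − 2`. -/
theorem twice_punctured_reedMuller_distance (p m r a b d : ℕ) [Fact p.Prime]
    (hm : 1 ≤ m) (hr : r ≤ m * (p - 1))
    (hab : r = a * (p - 1) + b) (hb : b ≤ p - 2)
    (hd : p * d = (p - b) * p ^ (m - a)) (hd3 : 3 ≤ d)
    (s₁ s₂ : Fin m → ZMod p) (hs : s₁ ≠ s₂) :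
    IsLeast {n : ℕ | ∃ f : MvPolynomial (Fin m) (ZMod p), f ≠ 0 ∧
      (∀ i, f.degreeOf i ≤ p - 1) ∧ f.totalDegree ≤ r ∧
      n = (Finset.univ.filter
        fun v : Fin m → ZMod p =>
          v ≠ s₁ ∧ v ≠ s₂ ∧ MvPolynomial.eval v f ≠ 0).card}
      (d - 2) :=
  twice_punctured_reedMuller_distance_general p m r a b d hab hb hd hd3 s₁ s₂ hs
end

section
/- Let p be a prime, m ≥ 1 an integer, and w an integer. Then Δ_p(m, r, w) is non-increasing as a function of r: for all integers r_1, r_2 with 0 ≤ r_1 ≤ r_2 ≤ m(p−1), one has Δ_p(m, r_2, w) ≤ Δ_p(m, r_1, w). -/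
/-- The `p`-nomial coefficient `C(m,s)_p`: the coefficient of `x^s` in
`(1 + x + ⋯ + x^{p−1})^m ∈ ℤ[x]`, extended by `0` for `s < 0`. -/
noncomputable def pnomial (p m : ℕ) (s : ℤ) : ℤ :=
  if 0 ≤ s then
    ((∑ i ∈ Finset.range p, (Polynomial.X : Polynomial ℤ) ^ i) ^ m).coeff s.toNat
  else 0

lemma pnomial_nonneg (p m : ℕ) (s : ℤ) : 0 ≤ pnomial p m s := by
  unfold pnomial
  split
  · have h : ((∑ i ∈ Finset.range p, (Polynomial.X : Polynomial ℤ) ^ i) ^ m)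
        = ((∑ i ∈ Finset.range p, (Polynomial.X : Polynomial ℕ) ^ i) ^ m).map
          (Nat.castRingHom ℤ) := by
      simp [Polynomial.map_pow, Polynomial.map_sum]
    rw [h, Polynomial.coeff_map]
    exact Int.natCast_nonneg _
  · exact le_refl 0

lemma pnomial_neg (p m : ℕ) (s : ℤ) (h : s < 0) : pnomial p m s = 0 := by
  unfold pnomial; rw [if_neg (by omega)]

lemma pnomial_big (p m : ℕ) (s : ℤ) (h : (m * (p-1) : ℕ) < s) : pnomial p m s = 0 := by
  unfold pnomial
  rw [if_pos (le_of_lt (lt_of_le_of_lt (Int.natCast_nonneg _) h))]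
  apply Polynomial.coeff_eq_zero_of_natDegree_lt
  have h1 : (∑ i ∈ Finset.range p, (Polynomial.X : Polynomial ℤ) ^ i).natDegree ≤ p - 1 := by
    apply Polynomial.natDegree_sum_le_of_forall_le
    intro i hi
    simp only [Polynomial.natDegree_X_pow]
    exact Nat.le_sub_one_of_lt (Finset.mem_range.mp hi)
  calc ((∑ i ∈ Finset.range p, (Polynomial.X : Polynomial ℤ) ^ i) ^ m).natDegree
      ≤ m * (∑ i ∈ Finset.range p, (Polynomial.X : Polynomial ℤ) ^ i).natDegree :=
        Polynomial.natDegree_pow_le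
    _ ≤ m * (p - 1) := Nat.mul_le_mul_left m h1
    _ < s.toNat := by omega

lemma pnomial_rec (p k : ℕ) (s : ℤ) :
    pnomial p (k+1) s = ∑ j ∈ Finset.range p, pnomial p k (s - (j:ℤ)) := by
  rcases lt_or_ge s 0 with hs | hs
  · rw [pnomial_neg p _ s hs, eq_comm]
    apply Finset.sum_eq_zero
    intro j _
    exact pnomial_neg p k _ (by omega)
  · unfold pnomial
    rw [if_pos hs, pow_succ, Finset.mul_sum, Polynomial.finset_sum_coeff]
    apply Finset.sum_congr rfl
    intro j hj
    rw [Polynomial.coeff_mul_X_pow']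
    by_cases h : (j:ℤ) ≤ s
    · rw [if_pos (show j ≤ s.toNat by omega), if_pos (show (0:ℤ) ≤ s - j by omega)]
      congr 1
      omega
    · rw [if_neg (show ¬ j ≤ s.toNat by omega), if_neg (show ¬ (0:ℤ) ≤ s - j by omega)]

/-- `C(m,>s)_p = ∑_{i>s} C(m,i)_p`.  Since `C(m,i)_p = 0` for `i > m(p−1)`,
the sum may be truncated at `m(p−1)`. -/
noncomputable def pnomialGT (p m : ℕ) (s : ℤ) : ℤ :=
  ∑ i ∈ Finset.range (m * (p - 1) + 1), if s < (i : ℤ) then pnomial p m i else 0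

lemma pnomialGT_nonneg (p m : ℕ) (s : ℤ) : 0 ≤ pnomialGT p m s := by
  apply Finset.sum_nonneg
  intro i _
  split
  · exact pnomial_nonneg p m i
  · exact le_refl 0

lemma pnomialGT_trunc (p m N : ℕ) (hN : m * (p-1) ≤ N) (w : ℤ) :
    pnomialGT p m w = ∑ i ∈ Finset.range (N + 1), if w < (i:ℤ) then pnomial p m i else 0 := by
  apply Finset.sum_subset
  · exact Finset.range_subset_range.mpr (by omega)
  · intro i hi hni
    have : (m * (p-1) : ℕ) < (i:ℤ) := by
      simp only [Finset.mem_range] at hi hni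
      exact_mod_cast (by omega : m * (p-1) < i)
    simp [pnomial_big p m i this]

lemma pnomialGT_shift (p k j M : ℕ) (hM : k * (p-1) + j ≤ M) (w : ℤ) :
    ∑ i ∈ Finset.range (M + 1), (if w < (i:ℤ) then pnomial p k ((i:ℤ) - (j:ℤ)) else 0)
      = pnomialGT p k (w - (j:ℤ)) := by
  have h1 : ∑ i ∈ Finset.Ico j (k * (p-1) + 1 + j),
      (if w < (i:ℤ) then pnomial p k ((i:ℤ) - (j:ℤ)) else 0)
      = ∑ i ∈ Finset.range (M + 1), (if w < (i:ℤ) then pnomial p k ((i:ℤ) - (j:ℤ)) else 0) := by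
    apply Finset.sum_subset
    · intro x hx
      simp only [Finset.mem_Ico] at hx
      exact Finset.mem_range.mpr (by omega)
    · intro i hi hni
      simp only [Finset.mem_range] at hi
      simp only [Finset.mem_Ico, not_and, not_lt] at hni
      rcases lt_or_ge i j with hij | hij
      · have : ((i:ℤ) - (j:ℤ)) < 0 := by omega
        simp [pnomial_neg p k _ this]
      · have h2 : k * (p-1) + 1 + j ≤ i := hni hij
        have : ((k * (p-1) : ℕ) : ℤ) < (i:ℤ) - (j:ℤ) := by
          push_cast; omega
        simp [pnomial_big p k _ this]
  rw [← h1, Finset.sum_Ico_eq_sum_range]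
  have h3 : k * (p-1) + 1 + j - j = k * (p-1) + 1 := by omega
  rw [h3]
  unfold pnomialGT
  apply Finset.sum_congr rfl
  intro i _
  have e1 : ((j + i : ℕ) : ℤ) - (j:ℤ) = (i:ℤ) := by push_cast; ring
  rw [e1]
  exact if_congr (by push_cast; omega) rfl rfl

lemma pnomialGT_rec (p k : ℕ) (w : ℤ) :
    pnomialGT p (k+1) w = ∑ j ∈ Finset.range p, pnomialGT p k (w - (j:ℤ)) := by
  rw [pnomialGT]
  have step : ∀ i ∈ Finset.range ((k+1) * (p-1) + 1),
      (if w < (i:ℤ) then pnomial p (k+1) (i:ℤ) else 0)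
      = ∑ j ∈ Finset.range p, (if w < (i:ℤ) then pnomial p k ((i:ℤ) - (j:ℤ)) else 0) := by
    intro i _
    split
    · exact pnomial_rec p k (i:ℤ)
    · rw [Finset.sum_const_zero]
  rw [Finset.sum_congr rfl step, Finset.sum_comm]
  apply Finset.sum_congr rfl
  intro j hj
  apply pnomialGT_shift
  have : j ≤ p - 1 := by
    simp only [Finset.mem_range] at hj; omega
  calc k * (p-1) + j ≤ k * (p-1) + (p-1) := by omega
    _ = (k+1) * (p-1) := by ring

lemma pnomialGT_le_succ (p k : ℕ) (hp : 1 ≤ p) (w : ℤ) :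
    pnomialGT p k w ≤ pnomialGT p (k+1) w := by
  rw [pnomialGT_rec]
  have h0 : (0:ℕ) ∈ Finset.range p := Finset.mem_range.mpr (by omega)
  have := Finset.single_le_sum (f := fun j : ℕ => pnomialGT p k (w - (j:ℤ)))
    (fun j _ => pnomialGT_nonneg p k _) h0
  simpa using this

lemma pnomialGT_mono (p : ℕ) (hp : 1 ≤ p) (w : ℤ) {a b : ℕ} (hab : a ≤ b) :
    pnomialGT p a w ≤ pnomialGT p b w := by
  induction b with
  | zero => simp_all
  | succ n ih =>
    rcases Nat.lt_or_ge a (n+1) with h | h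
    · exact le_trans (ih (by omega)) (pnomialGT_le_succ p n hp w)
    · have : a = n+1 := by omega
      subst this; rfl

/-- `Δ_p(m,r,w)`: writing `r = α(p−1)+β` with `0 ≤ β ≤ p−2` (so `α = r/(p−1)`,
`β = r % (p−1)`), this is `C(m−α,>w)_p` if `β = 0`, and
`C(m−α,>w)_p − ∑_{j=p−β}^{p−1} C(m−α−1,>w−j)_p` otherwise. -/
noncomputable def Δp (p m r : ℕ) (w : ℤ) : ℤ :=
  if r % (p - 1) = 0 then pnomialGT p (m - r / (p - 1)) w
  else pnomialGT p (m - r / (p - 1)) w -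
    ∑ j ∈ Finset.Icc (p - r % (p - 1)) (p - 1),
      pnomialGT p (m - r / (p - 1) - 1) (w - (j : ℤ))

lemma Δp_eq (p m r : ℕ) (hp : 1 ≤ p) (w : ℤ) :
    Δp p m r w = pnomialGT p (m - r / (p - 1)) w -
    ∑ j ∈ Finset.Icc (p - r % (p - 1)) (p - 1),
      pnomialGT p (m - r / (p - 1) - 1) (w - (j : ℤ)) := by
  unfold Δp
  split
  · rename_i h
    rw [h]
    rw [Finset.Icc_eq_empty (by omega), Finset.sum_empty, sub_zero]
  · rfl

lemma Δp_step (p : ℕ) (hp : 2 ≤ p) (m r : ℕ) (h : r + 1 ≤ m * (p-1)) (w : ℤ) :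
    Δp p m (r+1) w ≤ Δp p m r w := by
  obtain ⟨α, β, hβ, hr⟩ : ∃ α β, β < p-1 ∧ r = (p-1)*α + β :=
    ⟨r/(p-1), r%(p-1), Nat.mod_lt _ (by omega), ((Nat.div_add_mod r (p-1)).symm)⟩
  have hdr : r / (p-1) = α := by
    rw [hr, Nat.mul_add_div (by omega), Nat.div_eq_of_lt hβ, add_zero]
  have hmr : r % (p-1) = β := by
    rw [hr, Nat.mul_add_mod, Nat.mod_eq_of_lt hβ]
  rcases Nat.lt_or_ge (β+1) (p-1) with hA | hB
  · -- Case A : β + 1 < p - 1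
    have hsum : r + 1 = (p-1) * α + (β+1) := by omega
    have hd : (r+1)/(p-1) = α := by
      rw [hsum, Nat.mul_add_div (by omega), Nat.div_eq_of_lt hA, add_zero]
    have hm' : (r+1)%(p-1) = β+1 := by
      rw [hsum, Nat.mul_add_mod, Nat.mod_eq_of_lt hA]
    rw [Δp_eq p m (r+1) (by omega) w, Δp_eq p m r (by omega) w, hd, hm', hdr, hmr]
    apply sub_le_sub_left
    apply Finset.sum_le_sum_of_subset_of_nonneg
    · exact Finset.Icc_subset_Icc (by omega) le_rfl
    · intro j _ _
      exact pnomialGT_nonneg _ _ _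
  · -- Case B : β + 1 = p - 1
    have hβq : β + 1 = p - 1 := by omega
    have hr1 : r + 1 = (p-1) * (α + 1) := by
      calc r + 1 = (p-1)*α + (β+1) := by omega
        _ = (p-1)*α + (p-1) := by rw [hβq]
        _ = (p-1) * (α+1) := by ring
    have hd : (r+1)/(p-1) = α+1 := by rw [hr1, Nat.mul_div_cancel_left _ (by omega)]
    have hm' : (r+1)%(p-1) = 0 := by rw [hr1, Nat.mul_mod_right]
    have hαm : α + 1 ≤ m := by
      have h2 : (p-1) * (α+1) ≤ (p-1) * m := by
        rw [← hr1]
        calc r+1 ≤ m * (p-1) := h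
          _ = (p-1) * m := Nat.mul_comm m (p-1)
      exact Nat.le_of_mul_le_mul_left h2 (by omega)
    rw [Δp_eq p m (r+1) (by omega) w, Δp_eq p m r (by omega) w, hd, hm', hdr, hmr]
    rw [Finset.Icc_eq_empty (show ¬ p - 0 ≤ p - 1 by omega), Finset.sum_empty, sub_zero]
    have hk1 : m - (α + 1) = m - α - 1 := by omega
    have hk2 : m - α = (m - α - 1) + 1 := by omega
    rw [hk1]
    rw [show pnomialGT p (m - α) w
        = ∑ j ∈ Finset.range p, pnomialGT p (m - α - 1) (w - (j:ℤ)) by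
      rw [hk2, pnomialGT_rec]
      norm_num]
    have hpb : p - β = 2 := by omega
    rw [hpb]
    have hsplit : ∑ j ∈ Finset.range p, pnomialGT p (m - α - 1) (w - (j:ℤ)) =
        ∑ j ∈ Finset.Ico (0:ℕ) 2, pnomialGT p (m - α - 1) (w - (j:ℤ)) +
        ∑ j ∈ Finset.Ico (2:ℕ) p, pnomialGT p (m - α - 1) (w - (j:ℤ)) := by
      rw [Finset.range_eq_Ico]
      exact (Finset.sum_Ico_consecutive
          (fun j : ℕ => pnomialGT p (m - α - 1) (w - (j:ℤ))) (by omega) (by omega)).symm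
    have hIcc : Finset.Ico (2:ℕ) p = Finset.Icc 2 (p-1) := by
      rw [← Finset.Ico_add_one_right_eq_Icc]
      congr 1
      omega
    rw [hsplit, hIcc]
    have h01 : ∑ j ∈ Finset.Ico (0:ℕ) 2, pnomialGT p (m - α - 1) (w - (j:ℤ)) =
        pnomialGT p (m - α - 1) w + pnomialGT p (m - α - 1) (w - 1) := by
      rw [show Finset.Ico (0:ℕ) 2 = Finset.range 2 by rw [Finset.range_eq_Ico]]
      rw [Finset.sum_range_succ, Finset.sum_range_one]
      norm_num
    rw [h01]
    linarith [pnomialGT_nonneg p (m - α - 1) (w - 1)]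

/-- The Manhattan weight `|v|_M = ∑ i, val(v_i)` of a vector `v ∈ 𝔽_p^m`. -/
def manhattanWeight {p m : ℕ} (v : Fin m → ZMod p) : ℕ := ∑ i, (v i).val

/-- `Δ_p(m,r,w)` is non-increasing as a function of `r`: for
`0 ≤ r₁ ≤ r₂ ≤ m(p−1)` one has `Δ_p(m,r₂,w) ≤ Δ_p(m,r₁,w)`. -/
theorem Δp_antitone_in_degree (p : ℕ) (hp : p.Prime) (m : ℕ) (hm : 1 ≤ m)
    (w : ℤ) (r₁ r₂ : ℕ) (h₁₂ : r₁ ≤ r₂) (h₂ : r₂ ≤ m * (p - 1)) :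
    Δp p m r₂ w ≤ Δp p m r₁ w := by
  have hp2 : 2 ≤ p := hp.two_le
  induction r₂, h₁₂ using Nat.le_induction with
  | base => exact le_refl _
  | succ n hn ih =>
    exact le_trans (Δp_step p hp2 m n h₂ w) (ih (by omega))
end
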